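/- arXiv:0705.3362 — 4 statements merged into one kernel-verified Lean document; each statement's English description precedes it below -/
import Mathlib

section
/- Let θ ∈ (0, 1/2), C > 0, and t₀ ≥ 0. Suppose y : ℝ → ℝ is differentiable on [t₀, ∞), with y(t) ≥ 0 and y'(t) + C · y(t)^{2(1-θ)} ≤ 0 for all t ≥ t₀. Then there exists a constant C' > 0 such that y(t) ≤ C' (1 + t)^{-1/(1-2θ)} for all t ≥ t₀. -/
/-!
With `α = 1 - 2θ > 0`, the inequality reads `y' ≤ -C y^(1+α)`, so `y` is nonincreasing and, while
`y > 0`, the function `y^(-α)` grows at rate at least `α C`. Hence `y(t)^(-α)` is bounded below by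
a positive multiple of `1 + t`, which is the claimed decay `y(t) ≲ (1 + t)^(-1/α)`.
-/

open Set Real

section HasDerivAt

variable {f f' : ℝ → ℝ} {D : Set ℝ}

theorem monotoneOn_of_hasDerivAt_nonneg (hD : Convex ℝ D) (hf : ∀ x ∈ D, HasDerivAt f (f' x) x)
    (hf'₀ : ∀ x ∈ interior D, 0 ≤ f' x) : MonotoneOn f D :=
  monotoneOn_of_hasDerivWithinAt_nonneg hD (fun x hx ↦ (hf x hx).continuousAt.continuousWithinAt)
    (fun x hx ↦ (hf x (interior_subset hx)).hasDerivWithinAt) hf'₀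

theorem antitoneOn_of_hasDerivAt_nonpos (hD : Convex ℝ D) (hf : ∀ x ∈ D, HasDerivAt f (f' x) x)
    (hf'₀ : ∀ x ∈ interior D, f' x ≤ 0) : AntitoneOn f D :=
  antitoneOn_of_hasDerivWithinAt_nonpos hD (fun x hx ↦ (hf x hx).continuousAt.continuousWithinAt)
    (fun x hx ↦ (hf x (interior_subset hx)).hasDerivWithinAt) hf'₀

end HasDerivAt

section DifferentialInequality

variable {y y' : ℝ → ℝ} {α C a b : ℝ}

/-- The derivative of `y^(-α)` is `-α y^(-α-1) y' ≥ α C`. -/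
theorem rpow_neg_add_mul_le_of_hasDerivAt (hα : 0 ≤ α) (hab : a ≤ b)
    (hderiv : ∀ t ∈ Icc a b, HasDerivAt y (y' t) t) (hpos : ∀ t ∈ Icc a b, 0 < y t)
    (hineq : ∀ t ∈ Icc a b, y' t ≤ -(C * y t ^ (1 + α))) :
    y a ^ (-α) + α * C * (b - a) ≤ y b ^ (-α) := by
  have hg : ∀ t ∈ Icc a b, HasDerivAt (fun s ↦ y s ^ (-α) - α * C * s)
      (y' t * (-α) * y t ^ (-α - 1) - α * C) t := fun t ht ↦
    ((hderiv t ht).rpow_const (p := -α) (.inl (hpos t ht).ne')).sub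
      (by simpa using (hasDerivAt_id' t).const_mul (α * C))
  have hmono := monotoneOn_of_hasDerivAt_nonneg (convex_Icc a b) hg fun t ht ↦ by
    have ht' := interior_subset ht
    have hcancel : y t ^ (1 + α) * y t ^ (-α - 1) = 1 := by
      rw [← rpow_add (hpos t ht'), show 1 + α + (-α - 1) = 0 by ring, rpow_zero]
    have hscaled := mul_le_mul_of_nonneg_right (mul_le_mul_of_nonpos_right (hineq t ht') (neg_nonpos.2 hα))
      (rpow_nonneg (hpos t ht').le (-α - 1))
    linear_combination hscaled - α * C * hcancel
  have hends := hmono (left_mem_Icc.2 hab) (right_mem_Icc.2 hab) hab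
  linarith

theorem antitoneOn_Ici_of_hasDerivAt_le_neg_mul_rpow (hC : 0 ≤ C)
    (hderiv : ∀ t ∈ Ici a, HasDerivAt y (y' t) t) (hy : ∀ t ∈ Ici a, 0 ≤ y t)
    (hineq : ∀ t ∈ Ici a, y' t ≤ -(C * y t ^ α)) : AntitoneOn y (Ici a) :=
  antitoneOn_of_hasDerivAt_nonpos (convex_Ici a) hderiv fun t ht ↦
    (hineq t (interior_subset ht)).trans <|
      neg_nonpos.2 (mul_nonneg hC (rpow_nonneg (hy t (interior_subset ht)) _))

end DifferentialInequality

theorem exists_pos_mul_one_add_le_add_mul_sub {A B t₀ : ℝ} (hA : 0 < A) (hB : 0 < B)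
    (ht₀ : 0 < 1 + t₀) : ∃ c, 0 < c ∧ ∀ t, t₀ ≤ t → c * (1 + t) ≤ A + B * (t - t₀) := by
  refine ⟨min (A / (1 + t₀)) B, lt_min (div_pos hA ht₀) hB, fun t ht ↦ ?_⟩
  calc min (A / (1 + t₀)) B * (1 + t)
      = min (A / (1 + t₀)) B * (1 + t₀) + min (A / (1 + t₀)) B * (t - t₀) := by ring
    _ ≤ A + B * (t - t₀) := add_le_add ((le_div_iff₀ ht₀).1 (min_le_left _ _))
      (mul_le_mul_of_nonneg_right (min_le_right _ _) (sub_nonneg.2 ht))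

theorem le_rpow_inv_mul_of_mul_le_rpow {x c s α : ℝ} (hx : 0 < x) (hc : 0 < c) (hs : 0 < s)
    (hα : α < 0) (h : c * s ≤ x ^ α) : x ≤ c ^ α⁻¹ * s ^ α⁻¹ := by
  rw [← mul_rpow hc.le hs.le]
  exact (le_rpow_inv_iff_of_neg hx (mul_pos hc hs) hα).2 h

/-- If `θ ∈ (0, 1/2)`, `C > 0`, `t₀ ≥ 0` and `y` is a nonnegative
differentiable function on `[t₀, ∞)` satisfying `y' + C y^{2(1-θ)} ≤ 0` there, then
`y(t) ≤ C' (1+t)^{-1/(1-2θ)}` for all `t ≥ t₀`, for some constant `C' > 0`. -/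
theorem decay_of_differential_inequality
    (θ C t₀ : ℝ) (hθ : θ ∈ Set.Ioo (0:ℝ) (1/2)) (hC : 0 < C) (ht₀ : 0 ≤ t₀)
    (y y' : ℝ → ℝ)
    (hderiv : ∀ t ∈ Set.Ici t₀, HasDerivAt y (y' t) t)
    (hy : ∀ t ∈ Set.Ici t₀, 0 ≤ y t)
    (hineq : ∀ t ∈ Set.Ici t₀, y' t + C * (y t) ^ (2 * (1 - θ)) ≤ 0) :
    ∃ C' : ℝ, 0 < C' ∧ ∀ t ∈ Set.Ici t₀, y t ≤ C' * (1 + t) ^ (-(1 / (1 - 2 * θ))) := by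
  set α := 1 - 2 * θ
  have hα : 0 < α := by linarith [hθ.2]
  have hy' : ∀ t ∈ Ici t₀, y' t ≤ -(C * y t ^ (1 + α)) := fun t ht ↦ by
    have := hineq t ht
    rw [show 2 * (1 - θ) = 1 + α by ring] at this
    linarith
  have hanti := antitoneOn_Ici_of_hasDerivAt_le_neg_mul_rpow hC.le hderiv hy hy'
  -- `y t₀ + 1` rather than `y t₀`, which may vanish
  obtain ⟨c, hc, hlin⟩ := exists_pos_mul_one_add_le_add_mul_sub (A := (y t₀ + 1) ^ (-α)) (t₀ := t₀)
    (rpow_pos_of_pos (by linarith [hy t₀ self_mem_Ici]) _) (mul_pos hα hC) (by linarith)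
  refine ⟨c ^ (-α)⁻¹, rpow_pos_of_pos hc _, fun t ht ↦ ?_⟩
  have h1t : 0 < 1 + t := by linarith [mem_Ici.1 ht]
  obtain hyt | hyt := (hy t ht).eq_or_lt
  · rw [← hyt]
    exact mul_nonneg (rpow_pos_of_pos hc _).le (rpow_nonneg h1t.le _)
  have hyt₀ : 0 < y t₀ := hyt.trans_le (hanti self_mem_Ici ht ht)
  rw [show -(1 / α) = (-α)⁻¹ by rw [one_div, inv_neg]]
  refine le_rpow_inv_mul_of_mul_le_rpow hyt hc h1t (neg_lt_zero.2 hα) ?_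
  calc c * (1 + t) ≤ (y t₀ + 1) ^ (-α) + α * C * (t - t₀) := hlin t ht
    _ ≤ y t₀ ^ (-α) + α * C * (t - t₀) := by
      gcongr ?_ + _
      exact rpow_le_rpow_of_nonpos hyt₀ (le_add_of_nonneg_right zero_le_one) (neg_nonpos.2 hα.le)
    _ ≤ y t ^ (-α) := rpow_neg_add_mul_le_of_hasDerivAt hα.le ht (fun s hs ↦ hderiv s hs.1)
      (fun s hs ↦ hyt.trans_le (hanti hs.1 ht hs.2)) (fun s hs ↦ hy' s hs.1)
end

section
/- Let γ > 0, C ≥ 0, a > 0. Suppose y : ℝ → ℝ is differentiable on [1, ∞), with y(t) ≥ 0 and y'(t) + γ y(t) ≤ C (1 + t)^{-a} for all t ≥ 1. Then there exists a constant C' > 0 such that y(t) ≤ C' (1 + t)^{-a} for all t ≥ 1. -/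
/-!
For `t ≥ T`, where `a / (1 + t) ≤ γ / 2`, the barrier `z = M (1 + t)^{-a}` with `γ M ≥ 2 C`
satisfies `z' + γ z ≥ C (1 + t)^{-a}`, so `exp (γ t) (y - z)` is nonincreasing there and `y ≤ z`
persists from `t = T`. On the compact interval `[1, T]`, `y` is bounded by a multiple of the
positive continuous function `(1 + t)^{-a}`, which fixes `M`.
-/

open Set

theorem IsCompact.exists_le_mul_of_continuousOn {s : Set ℝ} (hs : IsCompact s) {f g : ℝ → ℝ}
    (hf : ContinuousOn f s) (hg : ContinuousOn g s) (hg₀ : ∀ t ∈ s, 0 < g t) :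
    ∃ K, ∀ t ∈ s, f t ≤ K * g t := by
  obtain ⟨K, hK⟩ := hs.bddAbove_image (hf.div hg fun t ht => (hg₀ t ht).ne')
  refine ⟨K, fun t ht => ?_⟩
  have hfg : f t / g t ≤ K := hK (mem_image_of_mem _ ht)
  rwa [div_le_iff₀ (hg₀ t ht)] at hfg

theorem le_of_deriv_add_mul_le {γ T : ℝ} {y y' z z' : ℝ → ℝ}
    (hy : ∀ t ∈ Ici T, HasDerivAt y (y' t) t) (hz : ∀ t ∈ Ici T, HasDerivAt z (z' t) t)
    (hT : y T ≤ z T) (h : ∀ t ∈ Ici T, y' t + γ * y t ≤ z' t + γ * z t) :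
    ∀ t ∈ Ici T, y t ≤ z t := by
  let w t := Real.exp (γ * t) * (y t - z t)
  have hw : ∀ t ∈ Ici T,
      HasDerivAt w (Real.exp (γ * t) * (y' t + γ * y t - (z' t + γ * z t))) t := by
    intro t ht
    have hexp : HasDerivAt (fun s => Real.exp (γ * s)) (Real.exp (γ * t) * γ) t := by
      simpa using ((hasDerivAt_id t).const_mul γ).exp
    exact (hexp.mul ((hy t ht).sub (hz t ht))).congr_deriv (by simp only [Pi.sub_apply]; ring)
  have hanti : AntitoneOn w (Ici T) := by
    refine antitoneOn_of_hasDerivWithinAt_nonpos (convex_Ici T)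
      (f' := fun t => Real.exp (γ * t) * (y' t + γ * y t - (z' t + γ * z t)))
      (fun t ht => (hw t ht).continuousAt.continuousWithinAt) (fun t ht => ?_) (fun t ht => ?_)
    · exact (hw t (interior_subset ht)).hasDerivWithinAt
    · exact mul_nonpos_of_nonneg_of_nonpos (Real.exp_pos _).le
        (sub_nonpos.2 (h t (interior_subset ht)))
  intro t ht
  have hwt : w t ≤ w T := hanti self_mem_Ici ht ht
  have hwT : w T ≤ 0 := mul_nonpos_of_nonneg_of_nonpos (Real.exp_pos _).le (sub_nonpos.2 hT)
  exact sub_nonpos.1 (nonpos_of_mul_nonpos_right (hwt.trans hwT) (Real.exp_pos (γ * t)))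

theorem hasDerivAt_one_add_rpow {t : ℝ} (ht : 0 < 1 + t) (p : ℝ) :
    HasDerivAt (fun s => (1 + s) ^ p) (p * (1 + t) ^ (p - 1)) t := by
  simpa using ((hasDerivAt_id t).const_add 1).rpow_const (p := p) (Or.inl ht.ne')

theorem forcing_le_barrier_deriv_add_mul {γ a C M t : ℝ} (ht : 0 < 1 + t) (hM : 0 ≤ M)
    (hCM : 2 * C ≤ γ * M) (hat : 2 * a ≤ γ * (1 + t)) :
    C * (1 + t) ^ (-a) ≤ M * (-a * (1 + t) ^ (-a - 1)) + γ * (M * (1 + t) ^ (-a)) := by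
  have hP : 0 < (1 + t) ^ (-a) := Real.rpow_pos_of_pos ht _
  have hdecay : 2 * (M * a / (1 + t)) ≤ γ * M := by
    rw [show 2 * (M * a / (1 + t)) = M * (2 * a) / (1 + t) by ring, div_le_iff₀ ht]
    nlinarith
  calc C * (1 + t) ^ (-a) ≤ (γ * M - M * a / (1 + t)) * (1 + t) ^ (-a) :=
        mul_le_mul_of_nonneg_right (by linarith) hP.le
    _ = M * (-a * (1 + t) ^ (-a - 1)) + γ * (M * (1 + t) ^ (-a)) := by
        rw [Real.rpow_sub ht, Real.rpow_one]; ring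

theorem gronwall_polynomial_forcing_general
    (γ C a : ℝ) (hγ : 0 < γ)
    (y y' : ℝ → ℝ)
    (hderiv : ∀ t ∈ Set.Ici (1:ℝ), HasDerivAt y (y' t) t)
    (hineq : ∀ t ∈ Set.Ici (1:ℝ), y' t + γ * y t ≤ C * (1 + t) ^ (-a)) :
    ∃ C' : ℝ, 0 < C' ∧ ∀ t ∈ Set.Ici (1:ℝ), y t ≤ C' * (1 + t) ^ (-a) := by
  set T := max 1 (2 * a / γ)
  have hT1 : 1 ≤ T := le_max_left _ _
  have hbarrier_pos : ∀ t ∈ Icc 1 T, 0 < (1 + t) ^ (-a) := fun t ht =>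
    Real.rpow_pos_of_pos (by linarith [ht.1]) _
  obtain ⟨K, hK⟩ := isCompact_Icc.exists_le_mul_of_continuousOn (g := fun t => (1 + t) ^ (-a))
    (fun t ht => (hderiv t ht.1).continuousAt.continuousWithinAt)
    (ContinuousOn.rpow_const (by fun_prop) fun t ht => Or.inl (by linarith [ht.1])) hbarrier_pos
  set M := max (max K (2 * C / γ)) 1
  have hM : 0 < M := lt_of_lt_of_le one_pos (le_max_right _ _)
  have hinit : ∀ t ∈ Icc 1 T, y t ≤ M * (1 + t) ^ (-a) := fun t ht =>
    (hK t ht).trans (mul_le_mul_of_nonneg_right ((le_max_left _ _).trans (le_max_left _ _))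
      (hbarrier_pos t ht).le)
  refine ⟨M, hM, fun t ht => ?_⟩
  rcases le_total t T with htT | hTt
  · exact hinit t ⟨ht, htT⟩
  refine le_of_deriv_add_mul_le (γ := γ) (fun s hs => hderiv s (hT1.trans hs))
    (fun s hs => (hasDerivAt_one_add_rpow (by linarith [hT1.trans hs.out]) (-a)).const_mul M)
    (hinit T ⟨hT1, le_rfl⟩) (fun s hs => ?_) t hTt
  have hs1 : 1 ≤ s := hT1.trans hs
  refine (hineq s hs1).trans (forcing_le_barrier_deriv_add_mul (by linarith) hM.le ?_ ?_)
  · rw [← div_le_iff₀' hγ]; exact (le_max_right _ _).trans (le_max_left _ _)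
  · have hsT : 2 * a / γ ≤ s := (le_max_right _ _).trans hs
    rw [div_le_iff₀' hγ] at hsT
    linarith

/-- Gronwall-type estimate with polynomially decaying forcing: if
`γ > 0`, `C ≥ 0`, `a > 0` and `y` is a nonnegative differentiable function on `[1, ∞)`
with `y' + γ y ≤ C (1+t)^{-a}` there, then `y(t) ≤ C' (1+t)^{-a}` on `[1, ∞)`
for some constant `C' > 0`. -/
theorem gronwall_polynomial_forcing
    (γ C a : ℝ) (hγ : 0 < γ) (hC : 0 ≤ C) (ha : 0 < a)
    (y y' : ℝ → ℝ)
    (hderiv : ∀ t ∈ Set.Ici (1:ℝ), HasDerivAt y (y' t) t)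
    (hy : ∀ t ∈ Set.Ici (1:ℝ), 0 ≤ y t)
    (hineq : ∀ t ∈ Set.Ici (1:ℝ), y' t + γ * y t ≤ C * (1 + t) ^ (-a)) :
    ∃ C' : ℝ, 0 < C' ∧ ∀ t ∈ Set.Ici (1:ℝ), y t ≤ C' * (1 + t) ^ (-a) :=
  gronwall_polynomial_forcing_general γ C a hγ y y' hderiv hineq
end

section
/- Let X be a real Banach space, θ ∈ (0, 1/2), β > 0, c > 0, Φ∞ ∈ ℝ, and ψ ∈ X. Let u : ℝ → X and Φ : ℝ → ℝ be continuously differentiable on [0, ∞), with Φ nonincreasing on [0, ∞). Assume: (i) Φ(t) ≥ Φ∞ for all t ≥ 0; (ii) ‖u'(t)‖² ≤ -Φ'(t) for all t ≥ 0; (iii) for every t ≥ 0 with Φ(t) > Φ∞ and ‖u(t) - ψ‖ < β one has -Φ'(t) ≥ (c/θ) (Φ(t) - Φ∞)^{1-θ} ‖u'(t)‖; (iv) there exists a sequence t_n → ∞ with u(t_n) → ψ in X. Then u(t) → ψ in X as t → ∞. -/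
/-!
With `H t = (Φ t - Φinf) ^ θ / c`, hypotheses (ii) and (iii) give `‖u'‖ ≤ -H'` wherever `u`
is in the `β`-ball around `ψ`; at times where `Φ` has already reached `Φinf` both sides vanish,
because `Φ` is then constant to the right. Hence, while `u` stays in that ball, the distance
it travels is at most the drop of `H`. Since `H` is nonincreasing and bounded below, its
remaining drop after some time is small; starting at a later time where `u` is close to `ψ`,
a continuity argument shows that `u` never leaves a small ball around `ψ` again.
-/

open Filter Topology Set Metric

theorem norm_sub_le_sub_of_norm_deriv_le_neg_deriv {E : Type*} [NormedAddCommGroup E]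
    [NormedSpace ℝ E] {f f' : ℝ → E} {g g' : ℝ → ℝ} {a b : ℝ} (hab : a ≤ b)
    (hf : ContinuousOn f (Icc a b)) (hf' : ∀ x ∈ Ico a b, HasDerivWithinAt f (f' x) (Ici x) x)
    (hg : ContinuousOn g (Icc a b)) (hg' : ∀ x ∈ Ico a b, HasDerivWithinAt g (g' x) (Ici x) x)
    (bound : ∀ x ∈ Ico a b, ‖f' x‖ ≤ -g' x) :
    ‖f b - f a‖ ≤ g a - g b :=
  image_norm_le_of_norm_deriv_right_le_deriv_boundary' (f := fun x => f x - f a)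
    (B := fun x => g a - g x) (hf.sub continuousOn_const) (fun x hx => (hf' x hx).sub_const _)
    (by simp) (continuousOn_const.sub hg) (fun x hx => (hg' x hx).const_sub _) bound
    (right_mem_Icc.2 hab)

section Trapping

variable {α : Type*} [PseudoMetricSpace α] {u : ℝ → α} {H : ℝ → ℝ} {ψ : α} {β : ℝ}

theorem mapsTo_closedBall_of_dist_le_sub {r T : ℝ} (hu : ContinuousOn u (Ici 0))
    (hlen : ∀ a b, 0 ≤ a → a ≤ b → MapsTo u (Icc a b) (ball ψ β) →
      dist (u b) (u a) ≤ H a - H b)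
    (hrβ : r < β) (hT : 0 ≤ T) (hstart : ∀ t ≥ T, H T - H t + dist (u T) ψ < r) :
    MapsTo u (Ici T) (closedBall ψ r) := by
  intro b hb
  have hsub : Ici T ⊆ Ici (0 : ℝ) := Ici_subset_Ici.2 hT
  have hclosed : IsClosed (u ⁻¹' closedBall ψ r ∩ Icc T b) := by
    rw [inter_comm]
    exact (hu.mono (Icc_subset_Ici_self.trans hsub)).preimage_isClosed_of_isClosed
      isClosed_Icc isClosed_closedBall
  have hT_mem : u T ∈ closedBall ψ r := by
    simpa using (hstart T le_rfl).le
  refine hclosed.Icc_subset_of_forall_mem_nhdsGT_of_Icc_subset hT_mem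
    (fun t ht hIcc => ?_) ⟨hb, le_rfl⟩
  -- Staying in the ball up to `t` makes the path from `u T` short, so `u t` is strictly inside.
  have hin : u t ∈ ball ψ r :=
    calc dist (u t) ψ ≤ dist (u t) (u T) + dist (u T) ψ := dist_triangle _ _ _
      _ ≤ H T - H t + dist (u T) ψ := by
        gcongr
        exact hlen T t hT ht.1 fun s hs => closedBall_subset_ball hrβ (hIcc hs)
      _ < r := hstart t ht.1
  have hnhds : u ⁻¹' ball ψ r ∈ 𝓝[Ici 0] t :=
    (hu t (hsub ht.1)).preimage_mem_nhdsWithin (isOpen_ball.mem_nhds hin)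
  exact mem_of_superset (nhdsWithin_mono _ (Ioi_subset_Ici ht.1 |>.trans hsub) hnhds)
    (preimage_mono ball_subset_closedBall)

theorem tendsto_of_mapClusterPt_of_dist_le_sub (hβ : 0 < β) (hu : ContinuousOn u (Ici 0))
    (hH : AntitoneOn H (Ici 0)) (hHb : BddBelow (H '' Ici 0))
    (hlen : ∀ a b, 0 ≤ a → a ≤ b → MapsTo u (Icc a b) (ball ψ β) →
      dist (u b) (u a) ≤ H a - H b)
    (hψ : MapClusterPt ψ atTop u) :
    Tendsto u atTop (𝓝 ψ) := by
  rw [Metric.tendsto_atTop]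
  intro ε hε
  set r := min ε β / 2 with hr
  have hr0 : 0 < r := by positivity
  have hrε : r < ε := by linarith [min_le_left ε β]
  have hrβ : r < β := by linarith [min_le_right ε β]
  set l := sInf (H '' Ici 0)
  obtain ⟨_, ⟨y, hy, rfl⟩, hyl⟩ :=
    exists_lt_of_csInf_lt (nonempty_Ici.image H) (lt_add_of_pos_right l (half_pos hr0))
  obtain ⟨T, hTψ, hTy⟩ :=
    ((hψ.frequently (ball_mem_nhds ψ (half_pos hr0))).and_eventually
      (eventually_ge_atTop y)).exists
  have hT : 0 ≤ T := le_trans hy hTy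
  have hstart : ∀ t ≥ T, H T - H t + dist (u T) ψ < r := by
    intro t ht
    have hHT : H T ≤ H y := hH hy hT hTy
    have hlt : l ≤ H t := csInf_le hHb (mem_image_of_mem H (le_trans hT ht))
    have hTψ' : dist (u T) ψ < r / 2 := hTψ
    linarith
  exact ⟨T, fun t ht => (mapsTo_closedBall_of_dist_le_sub hu hlen hrβ hT hstart ht).trans_lt hrε⟩

end Trapping

theorem HasDerivAt.eq_zero_of_eqOn_Ici {f : ℝ → ℝ} {f' x a : ℝ} (hf : HasDerivAt f f' x)
    (hconst : EqOn f (fun _ => a) (Ici x)) : f' = 0 :=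
  (uniqueDiffWithinAt_Ici x).eq_deriv _ hf.hasDerivWithinAt
    ((hasDerivWithinAt_const x _ a).congr_of_mem (fun _ ht => hconst ht) self_mem_Ici)

theorem AntitoneOn.eqOn_Ici_of_eq_of_forall_le {Φ : ℝ → ℝ} {m x : ℝ}
    (hmono : AntitoneOn Φ (Ici 0)) (hm : ∀ t ∈ Ici (0 : ℝ), m ≤ Φ t) (hx : 0 ≤ x)
    (hΦx : Φ x = m) : EqOn Φ (fun _ => m) (Ici x) := fun t ht =>
  le_antisymm (hΦx ▸ hmono hx (hx.trans ht) ht) (hm t (hx.trans ht))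

theorem le_neg_mul_rpow_div_of_lojasiewicz {θ c y v d : ℝ} (hθ : 0 < θ) (hc : 0 < c)
    (hy : 0 ≤ y) (hd : y = 0 → d = 0) (hsq : v ^ 2 ≤ -d)
    (hloj : 0 < y → c / θ * y ^ (1 - θ) * v ≤ -d) :
    v ≤ -(θ * y ^ (θ - 1) * d / c) := by
  rcases hy.lt_or_eq with hy | rfl
  · have hcancel : θ * y ^ (θ - 1) / c * (c / θ * y ^ (1 - θ) * v) = v := by
      rw [show θ * y ^ (θ - 1) / c * (c / θ * y ^ (1 - θ) * v)
          = θ / θ * (c / c) * (y ^ (θ - 1) * y ^ (1 - θ)) * v by ring,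
        ← Real.rpow_add hy]
      simp [hθ.ne', hc.ne']
    calc v = θ * y ^ (θ - 1) / c * (c / θ * y ^ (1 - θ) * v) := hcancel.symm
      _ ≤ θ * y ^ (θ - 1) / c * -d := by gcongr; exact hloj hy
      _ = -(θ * y ^ (θ - 1) * d / c) := by ring
  · rw [hd rfl] at hsq ⊢
    simp only [mul_zero, zero_div, neg_zero] at hsq ⊢
    nlinarith

section Lojasiewicz

variable {X : Type*} [NormedAddCommGroup X] [NormedSpace ℝ X] {θ β c Φinf x : ℝ} {ψ : X}
  {u u' : ℝ → X} {Φ Φ' : ℝ → ℝ}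

theorem hasDerivWithinAt_rpow_sub_div (hΦ : HasDerivAt Φ (Φ' x) x)
    (hmono : AntitoneOn Φ (Ici 0)) (h1 : ∀ t ∈ Ici (0 : ℝ), Φinf ≤ Φ t) (hx : 0 ≤ x) :
    HasDerivWithinAt (fun t => (Φ t - Φinf) ^ θ / c)
      (θ * (Φ x - Φinf) ^ (θ - 1) * Φ' x / c) (Ici x) x := by
  rcases (h1 x hx).lt_or_eq with hlt | heq
  · exact (((hΦ.sub_const Φinf).rpow_const (Or.inl (sub_pos.2 hlt).ne')).div_const c
      ).hasDerivWithinAt.congr_deriv (by ring)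
  · have hconst := hmono.eqOn_Ici_of_eq_of_forall_le h1 hx heq.symm
    rw [hΦ.eq_zero_of_eqOn_Ici hconst, mul_zero, zero_div]
    exact (hasDerivWithinAt_const x _ ((Φinf - Φinf) ^ θ / c)).congr_of_mem
      (fun t ht => by simp only [hconst ht]) self_mem_Ici

theorem dist_le_sub_rpow_of_lojasiewicz (hθ : 0 < θ) (hc : 0 < c)
    (hu : ∀ t ∈ Ici (0 : ℝ), HasDerivAt u (u' t) t)
    (hΦ : ∀ t ∈ Ici (0 : ℝ), HasDerivAt Φ (Φ' t) t)
    (hmono : AntitoneOn Φ (Ici 0))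
    (h1 : ∀ t ∈ Ici (0 : ℝ), Φinf ≤ Φ t)
    (h2 : ∀ t ∈ Ici (0 : ℝ), ‖u' t‖ ^ 2 ≤ -Φ' t)
    (h3 : ∀ t ∈ Ici (0 : ℝ), Φinf < Φ t → ‖u t - ψ‖ < β →
      (c / θ) * (Φ t - Φinf) ^ (1 - θ) * ‖u' t‖ ≤ -Φ' t)
    {a b : ℝ} (ha : 0 ≤ a) (hab : a ≤ b) (hball : MapsTo u (Icc a b) (ball ψ β)) :
    dist (u b) (u a) ≤ (Φ a - Φinf) ^ θ / c - (Φ b - Φinf) ^ θ / c := by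
  have hsub : Icc a b ⊆ Ici 0 := Icc_subset_Ici_self.trans (Ici_subset_Ici.2 ha)
  have hsub' : Ico a b ⊆ Ici 0 := Ico_subset_Icc_self.trans hsub
  have hΦcont : ContinuousOn Φ (Icc a b) :=
    fun t ht => (hΦ t (hsub ht)).continuousAt.continuousWithinAt
  rw [dist_eq_norm]
  refine norm_sub_le_sub_of_norm_deriv_le_neg_deriv hab
    (fun t ht => (hu t (hsub ht)).continuousAt.continuousWithinAt)
    (fun t ht => (hu t (hsub' ht)).hasDerivWithinAt)
    (((hΦcont.sub continuousOn_const).rpow_const fun _ _ => Or.inr hθ.le).div_const c)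
    (fun t ht => hasDerivWithinAt_rpow_sub_div (hΦ t (hsub' ht)) hmono h1 (hsub' ht))
    (fun t ht => ?_)
  have ht0 : t ∈ Ici (0 : ℝ) := hsub' ht
  exact le_neg_mul_rpow_div_of_lojasiewicz hθ hc (sub_nonneg.2 (h1 t ht0))
    (fun h => (hΦ t ht0).eq_zero_of_eqOn_Ici
      (hmono.eqOn_Ici_of_eq_of_forall_le h1 ht0 (sub_eq_zero.1 h)))
    (h2 t ht0)
    (fun h => h3 t ht0 (sub_pos.1 h) (mem_ball_iff_norm.1 (hball (Ico_subset_Icc_self ht))))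

end Lojasiewicz

theorem lojasiewicz_simon_convergence_general
    {X : Type*} [NormedAddCommGroup X] [NormedSpace ℝ X]
    (θ β c Φinf : ℝ) (hθ : θ ∈ Set.Ioo (0:ℝ) (1/2)) (hβ : 0 < β) (hc : 0 < c)
    (ψ : X) (u : ℝ → X) (u' : ℝ → X) (Φ Φ' : ℝ → ℝ)
    (hu : ∀ t ∈ Set.Ici (0:ℝ), HasDerivAt u (u' t) t)
    (hΦ : ∀ t ∈ Set.Ici (0:ℝ), HasDerivAt Φ (Φ' t) t)
    (hmono : AntitoneOn Φ (Set.Ici (0:ℝ)))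
    (h1 : ∀ t ∈ Set.Ici (0:ℝ), Φinf ≤ Φ t)
    (h2 : ∀ t ∈ Set.Ici (0:ℝ), ‖u' t‖ ^ 2 ≤ -Φ' t)
    (h3 : ∀ t ∈ Set.Ici (0:ℝ), Φinf < Φ t → ‖u t - ψ‖ < β →
      (c / θ) * (Φ t - Φinf) ^ (1 - θ) * ‖u' t‖ ≤ -Φ' t)
    (h4 : ∃ tseq : ℕ → ℝ, Tendsto tseq atTop atTop ∧
      Tendsto (fun n => u (tseq n)) atTop (𝓝 ψ)) :
    Tendsto u atTop (𝓝 ψ) := by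
  obtain ⟨tseq, htseq, hconv⟩ := h4
  refine tendsto_of_mapClusterPt_of_dist_le_sub (H := fun t => (Φ t - Φinf) ^ θ / c) hβ
    (fun t ht => (hu t ht).continuousAt.continuousWithinAt) ?_ ?_
    (fun a b ha hab hball =>
      dist_le_sub_rpow_of_lojasiewicz hθ.1 hc hu hΦ hmono h1 h2 h3 ha hab hball)
    (MapClusterPt.of_comp htseq hconv.mapClusterPt)
  · exact fun s hs t ht hst => div_le_div_of_nonneg_right
      (Real.rpow_le_rpow (sub_nonneg.2 (h1 t ht)) (sub_le_sub_right (hmono hs ht hst) _) hθ.1.le)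
      hc.le
  · exact ⟨0, forall_mem_image.2 fun t ht =>
      div_nonneg (Real.rpow_nonneg (sub_nonneg.2 (h1 t ht)) _) hc.le⟩

/-- Abstract Łojasiewicz–Simon convergence argument: let `X` be a real
Banach space, `θ ∈ (0,1/2)`, `β > 0`, `c > 0`, `Φinf ∈ ℝ`, `ψ ∈ X`, and let
`u : ℝ → X`, `Φ : ℝ → ℝ` be continuously differentiable on `[0,∞)` with `Φ`
nonincreasing. If (i) `Φ(t) ≥ Φinf`, (ii) `‖u'(t)‖² ≤ -Φ'(t)`, (iii) the
Łojasiewicz-type inequality `-Φ'(t) ≥ (c/θ)(Φ(t) - Φinf)^{1-θ}‖u'(t)‖` holds whenever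
`Φ(t) > Φinf` and `‖u(t) - ψ‖ < β`, and (iv) `u(t_n) → ψ` along some sequence
`t_n → ∞`, then `u(t) → ψ` as `t → ∞`. -/
theorem lojasiewicz_simon_convergence
    {X : Type*} [NormedAddCommGroup X] [NormedSpace ℝ X] [CompleteSpace X]
    (θ β c Φinf : ℝ) (hθ : θ ∈ Set.Ioo (0:ℝ) (1/2)) (hβ : 0 < β) (hc : 0 < c)
    (ψ : X) (u : ℝ → X) (u' : ℝ → X) (Φ Φ' : ℝ → ℝ)
    (hu : ∀ t ∈ Set.Ici (0:ℝ), HasDerivAt u (u' t) t)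
    (hu' : ContinuousOn u' (Set.Ici (0:ℝ)))
    (hΦ : ∀ t ∈ Set.Ici (0:ℝ), HasDerivAt Φ (Φ' t) t)
    (hΦ' : ContinuousOn Φ' (Set.Ici (0:ℝ)))
    (hmono : AntitoneOn Φ (Set.Ici (0:ℝ)))
    (h1 : ∀ t ∈ Set.Ici (0:ℝ), Φinf ≤ Φ t)
    (h2 : ∀ t ∈ Set.Ici (0:ℝ), ‖u' t‖ ^ 2 ≤ -Φ' t)
    (h3 : ∀ t ∈ Set.Ici (0:ℝ), Φinf < Φ t → ‖u t - ψ‖ < β →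
      (c / θ) * (Φ t - Φinf) ^ (1 - θ) * ‖u' t‖ ≤ -Φ' t)
    (h4 : ∃ tseq : ℕ → ℝ, Tendsto tseq atTop atTop ∧
      Tendsto (fun n => u (tseq n)) atTop (𝓝 ψ)) :
    Tendsto u atTop (𝓝 ψ) :=
  lojasiewicz_simon_convergence_general θ β c Φinf hθ hβ hc ψ u u' Φ Φ' hu hΦ hmono h1 h2 h3 h4
end

section
/- Let θ ∈ (0, 1/2), c > 0, K ≥ 0, and t₀ ≥ 0. Let Φ : ℝ → ℝ be differentiable and nonincreasing on [t₀, ∞) with 0 < Φ(t) ≤ K (1 + t)^{-1/(1-2θ)} for all t ≥ t₀, and let g : ℝ → ℝ be continuous and nonnegative on [t₀, ∞) such that -θ Φ(t)^{θ-1} Φ'(t) ≥ c · g(t) for all t ≥ t₀. Then for all t ≥ t₀: ∫_t^∞ g(τ) dτ ≤ (K^θ / c) (1 + t)^{-θ/(1-2θ)}. -/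
/-!
The Łojasiewicz inequality says that `c g ≤ -(Φ^θ)'`, so integrating over `[t, T]` gives
`c ∫_t^T g ≤ Φ(t)^θ - Φ(T)^θ ≤ Φ(t)^θ`. Letting `T → ∞` bounds the tail integral by `Φ(t)^θ / c`,
and raising the decay bound for `Φ` to the power `θ` turns this into the stated rate.
-/

open MeasureTheory Set Filter

theorem integrableOn_Ioi_and_integral_le_of_intervalIntegral_le {g : ℝ → ℝ} {a C : ℝ}
    (hgi : ∀ b, a ≤ b → IntervalIntegrable g volume a b) (hg : ∀ x ∈ Ioi a, 0 ≤ g x)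
    (hbound : ∀ b, a ≤ b → ∫ x in a..b, g x ≤ C) :
    IntegrableOn g (Ioi a) ∧ ∫ x in Ioi a, g x ≤ C := by
  have hint : IntegrableOn g (Ioi a) := by
    refine integrableOn_Ioi_of_intervalIntegral_norm_bounded C a (b := id) (l := atTop)
      (fun b => ?_) tendsto_id ?_
    · exact (hgi (max a b) (le_max_left a b)).1.mono_set (Ioc_subset_Ioc_right (le_max_right a b))
    · filter_upwards [eventually_ge_atTop a] with b hab
      rw [intervalIntegral.integral_congr_ae (ae_of_all _ fun x hx => Real.norm_of_nonneg
        (hg x (Ioc_subset_Ioi_self ((uIoc_of_le hab) ▸ hx))))]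
      exact hbound b hab
  refine ⟨hint, le_of_tendsto (intervalIntegral_tendsto_integral_Ioi a hint tendsto_id) ?_⟩
  filter_upwards [eventually_ge_atTop a] with b hab using hbound b hab

theorem mul_intervalIntegral_le_rpow_sub_rpow {Φ Φ' g : ℝ → ℝ} {θ c a b : ℝ} (hab : a ≤ b)
    (hΦ : ∀ x ∈ Icc a b, HasDerivAt Φ (Φ' x) x) (hΦpos : ∀ x ∈ Icc a b, 0 < Φ x)
    (hg : IntervalIntegrable g volume a b)
    (hineq : ∀ x ∈ Ioo a b, c * g x ≤ -θ * Φ x ^ (θ - 1) * Φ' x) :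
    c * ∫ x in a..b, g x ≤ Φ a ^ θ - Φ b ^ θ := by
  have hderiv : ∀ x ∈ Icc a b,
      HasDerivAt (fun y => -Φ y ^ θ) (-θ * Φ x ^ (θ - 1) * Φ' x) x := fun x hx =>
    ((hΦ x hx).rpow_const (Or.inl (hΦpos x hx).ne')).neg.congr_deriv (by ring)
  rw [← intervalIntegral.integral_const_mul, ← neg_sub_neg]
  exact intervalIntegral.integral_le_sub_of_hasDeriv_right_of_le hab
    (fun x hx => (hderiv x hx).continuousAt.continuousWithinAt)
    (fun x hx => (hderiv x (Ioo_subset_Icc_self hx)).hasDerivWithinAt)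
    ((intervalIntegrable_iff_integrableOn_Icc_of_le hab).1 (hg.const_mul c)) hineq

theorem integrableOn_Ioi_and_integral_le_rpow_div {Φ Φ' g : ℝ → ℝ} {θ c a : ℝ} (hc : 0 < c)
    (hΦ : ∀ x ∈ Ici a, HasDerivAt Φ (Φ' x) x) (hΦpos : ∀ x ∈ Ici a, 0 < Φ x)
    (hg : ContinuousOn g (Ici a)) (hgpos : ∀ x ∈ Ici a, 0 ≤ g x)
    (hineq : ∀ x ∈ Ici a, c * g x ≤ -θ * Φ x ^ (θ - 1) * Φ' x) :
    IntegrableOn g (Ioi a) ∧ ∫ x in Ioi a, g x ≤ Φ a ^ θ / c := by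
  have hgi : ∀ b, a ≤ b → IntervalIntegrable g volume a b := fun b hb =>
    (hg.mono (uIcc_of_le hb ▸ Icc_subset_Ici_self)).intervalIntegrable
  refine integrableOn_Ioi_and_integral_le_of_intervalIntegral_le hgi
    (fun x hx => hgpos x hx.out.le) fun b hb => ?_
  have hmain := mul_intervalIntegral_le_rpow_sub_rpow hb (fun x hx => hΦ x hx.1)
    (fun x hx => hΦpos x hx.1) (hgi b hb) (fun x hx => hineq x hx.1.le)
  rw [le_div_iff₀ hc, mul_comm]
  linarith [Real.rpow_nonneg (hΦpos b hb).le θ]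

theorem rpow_le_of_le_mul_rpow {x K s p θ : ℝ} (hx : 0 ≤ x) (hK : 0 ≤ K) (hs : 0 ≤ s)
    (hθ : 0 ≤ θ) (h : x ≤ K * s ^ p) : x ^ θ ≤ K ^ θ * s ^ (p * θ) := by
  calc x ^ θ ≤ (K * s ^ p) ^ θ := Real.rpow_le_rpow hx h hθ
    _ = K ^ θ * s ^ (p * θ) := by rw [Real.mul_rpow hK (Real.rpow_nonneg hs p), Real.rpow_mul hs]

theorem tail_integral_estimate_general
    (θ c K t₀ : ℝ) (hθ : θ ∈ Set.Ioo (0:ℝ) (1/2)) (hc : 0 < c) (hK : 0 ≤ K)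
    (ht₀ : 0 ≤ t₀) (Φ Φ' g : ℝ → ℝ)
    (hΦd : ∀ t ∈ Set.Ici t₀, HasDerivAt Φ (Φ' t) t)
    (hΦpos : ∀ t ∈ Set.Ici t₀, 0 < Φ t)
    (hΦdecay : ∀ t ∈ Set.Ici t₀, Φ t ≤ K * (1 + t) ^ (-(1 / (1 - 2 * θ))))
    (hg : ContinuousOn g (Set.Ici t₀))
    (hgpos : ∀ t ∈ Set.Ici t₀, 0 ≤ g t)
    (hineq : ∀ t ∈ Set.Ici t₀, c * g t ≤ -θ * Φ t ^ (θ - 1) * Φ' t) :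
    IntegrableOn g (Set.Ici t₀) ∧
      ∀ t ∈ Set.Ici t₀,
        (∫ τ in Set.Ici t, g τ) ≤ (K ^ θ / c) * (1 + t) ^ (-(θ / (1 - 2 * θ))) := by
  have htail : ∀ t ∈ Ici t₀, IntegrableOn g (Ioi t) ∧ ∫ τ in Ioi t, g τ ≤ Φ t ^ θ / c := by
    intro t ht
    have hsub : Ici t ⊆ Ici t₀ := Ici_subset_Ici.2 ht
    exact integrableOn_Ioi_and_integral_le_rpow_div hc (fun x hx => hΦd x (hsub hx))
      (fun x hx => hΦpos x (hsub hx)) (hg.mono hsub) (fun x hx => hgpos x (hsub hx))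
      fun x hx => hineq x (hsub hx)
  refine ⟨(integrableOn_Ici_iff_integrableOn_Ioi).mpr (htail t₀ self_mem_Ici).1, fun t ht => ?_⟩
  have hdecay : Φ t ^ θ ≤ K ^ θ * (1 + t) ^ (-(θ / (1 - 2 * θ))) := by
    convert rpow_le_of_le_mul_rpow (hΦpos t ht).le hK (by linarith [ht.out]) hθ.1.le
      (hΦdecay t ht) using 3
    ring
  rw [integral_Ici_eq_integral_Ioi, div_mul_eq_mul_div]
  calc ∫ τ in Ioi t, g τ ≤ Φ t ^ θ / c := (htail t ht).2
    _ ≤ K ^ θ * (1 + t) ^ (-(θ / (1 - 2 * θ))) / c := by gcongr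

/-- The tail-integral estimate (5.18)–(5.19) of the paper: if `Φ`
is positive, nonincreasing and differentiable on `[t₀,∞)` with
`Φ(t) ≤ K (1+t)^{-1/(1-2θ)}`, and `g ≥ 0` is continuous with
`-θ Φ(t)^{θ-1} Φ'(t) ≥ c g(t)` on `[t₀,∞)`, then
`∫_t^∞ g ≤ (K^θ/c)(1+t)^{-θ/(1-2θ)}` for all `t ≥ t₀`. -/
theorem tail_integral_estimate
    (θ c K t₀ : ℝ) (hθ : θ ∈ Set.Ioo (0:ℝ) (1/2)) (hc : 0 < c) (hK : 0 ≤ K)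
    (ht₀ : 0 ≤ t₀) (Φ Φ' g : ℝ → ℝ)
    (hΦd : ∀ t ∈ Set.Ici t₀, HasDerivAt Φ (Φ' t) t)
    (hmono : AntitoneOn Φ (Set.Ici t₀))
    (hΦpos : ∀ t ∈ Set.Ici t₀, 0 < Φ t)
    (hΦdecay : ∀ t ∈ Set.Ici t₀, Φ t ≤ K * (1 + t) ^ (-(1 / (1 - 2 * θ))))
    (hg : ContinuousOn g (Set.Ici t₀))
    (hgpos : ∀ t ∈ Set.Ici t₀, 0 ≤ g t)
    (hineq : ∀ t ∈ Set.Ici t₀, c * g t ≤ -θ * Φ t ^ (θ - 1) * Φ' t) :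
    IntegrableOn g (Set.Ici t₀) ∧
      ∀ t ∈ Set.Ici t₀,
        (∫ τ in Set.Ici t, g τ) ≤ (K ^ θ / c) * (1 + t) ^ (-(θ / (1 - 2 * θ))) :=
  tail_integral_estimate_general θ c K t₀ hθ hc hK ht₀ Φ Φ' g hΦd hΦpos hΦdecay hg hgpos hineq
end
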